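/- The monic polynomial S̄₄(p,q,r,s;x) = x⁴ + 2((3q+s)/(5p+r))x² + ((3q+s)(q+s))/((5p+r)(3p+r)) satisfies the differential equation x²(px²+q)y'' + x(rx²+s)y' - 4(r+3p)x² y = 0. -/

import Mathlib

/-!
Applied to an even monic quartic `y = x⁴ + a x² + c`, the operator
`x²(px² + q) y'' + x(rx² + s) y' - 4(r + 3p) x² y` has no `x⁶` term, since `4(r + 3p) = 4·3·p + 4·r`
is the eigenvalue belonging to the leading monomial. What remains is
`(4(3q + s) - 2a(5p + r)) x⁴ + (2a(q + s) - 4c(3p + r)) x²`, and the two coefficients vanish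
successively for `a = 2(3q + s)/(5p + r)` and then `c = a(q + s)/(2(3p + r))`.
-/

lemma deriv_quartic_even (a c : ℝ) :
    deriv (fun t : ℝ => t ^ 4 + a * t ^ 2 + c) = fun t => 4 * t ^ 3 + 2 * a * t :=
  funext fun t => HasDerivAt.deriv <|
    (((hasDerivAt_pow 4 t).add ((hasDerivAt_pow 2 t).const_mul a)).add_const c).congr_deriv
      (by norm_num; ring)

lemma deriv_deriv_quartic_even (a c : ℝ) :
    deriv (deriv fun t : ℝ => t ^ 4 + a * t ^ 2 + c) = fun t => 12 * t ^ 2 + 2 * a := by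
  rw [deriv_quartic_even]
  exact funext fun t => HasDerivAt.deriv <|
    (((hasDerivAt_pow 3 t).const_mul 4).add ((hasDerivAt_id' t).const_mul (2 * a))).congr_deriv
      (by norm_num; ring)

lemma symmetric_ode_quartic_residual (p q r s a c x : ℝ) :
    x ^ 2 * (p * x ^ 2 + q) * deriv (deriv fun t => t ^ 4 + a * t ^ 2 + c) x +
        x * (r * x ^ 2 + s) * deriv (fun t => t ^ 4 + a * t ^ 2 + c) x -
        4 * (r + 3 * p) * x ^ 2 * (x ^ 4 + a * x ^ 2 + c) =
      (4 * (3 * q + s) - 2 * a * (5 * p + r)) * x ^ 4 +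
        (2 * a * (q + s) - 4 * c * (3 * p + r)) * x ^ 2 := by
  rw [deriv_deriv_quartic_even, deriv_quartic_even]
  ring

theorem stmt8 (p q r s : ℝ) (h5 : 5 * p + r ≠ 0) (h3 : 3 * p + r ≠ 0) :
    ∀ x : ℝ,
      x ^ 2 * (p * x ^ 2 + q) *
          deriv (deriv (fun t => t ^ 4 + 2 * ((3 * q + s) / (5 * p + r)) * t ^ 2 +
            ((3 * q + s) * (q + s)) / ((5 * p + r) * (3 * p + r)))) x +
        x * (r * x ^ 2 + s) *
          deriv (fun t => t ^ 4 + 2 * ((3 * q + s) / (5 * p + r)) * t ^ 2 +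
            ((3 * q + s) * (q + s)) / ((5 * p + r) * (3 * p + r))) x -
        4 * (r + 3 * p) * x ^ 2 *
          (x ^ 4 + 2 * ((3 * q + s) / (5 * p + r)) * x ^ 2 +
            ((3 * q + s) * (q + s)) / ((5 * p + r) * (3 * p + r))) = 0 := by
  intro x
  have hcoeff4 : 4 * (3 * q + s) - 2 * (2 * ((3 * q + s) / (5 * p + r))) * (5 * p + r) = 0 := by
    field_simp; ring
  have hcoeff2 : 2 * (2 * ((3 * q + s) / (5 * p + r))) * (q + s) -
      4 * ((3 * q + s) * (q + s) / ((5 * p + r) * (3 * p + r))) * (3 * p + r) = 0 := by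
    field_simp; ring
  rw [symmetric_ode_quartic_residual, hcoeff4, hcoeff2]
  ring
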